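/- In a symmetric monoidal category, given dualizable objects A, B, C and morphisms Φ : A → B, Ψ : B → C, Υ : C → A, the three cyclic rotation equivalences satisfy the coherence m(Φ, Υ∘Ψ) ∘ m(Ψ, Φ∘Υ) = m(Ψ∘Φ, Υ) as equalities of morphisms Tr(Ψ∘Φ∘Υ) → Tr(Υ∘Ψ∘Φ). -/
import Mathlib


open CategoryTheory MonoidalCategory

/-- The categorical trace of an endomorphism `Φ : A ⟶ A` relative to duality data
`(Av, η, ε)`. -/
noncomputable def catTrace {C : Type*} [Category C] [MonoidalCategory C] [SymmetricCategory C]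
    {A Av : C} (η : 𝟙_ C ⟶ A ⊗ Av) (ε : Av ⊗ A ⟶ 𝟙_ C) (Φ : A ⟶ A) : 𝟙_ C ⟶ 𝟙_ C :=
  η ≫ (Φ ▷ Av) ≫ (β_ A Av).hom ≫ ε

private lemma trace_swap {C : Type*} [Category C] [MonoidalCategory C] [SymmetricCategory C]
    {A B : C} [HasRightDual A] [HasRightDual B] (f : A ⟶ B) (g : B ⟶ A) :
    η_ A (Aᘁ) ≫ ((f ≫ g) ▷ (Aᘁ)) ≫ (β_ A (Aᘁ)).hom ≫ ε_ A (Aᘁ)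
    = η_ B (Bᘁ) ≫ ((g ≫ f) ▷ (Bᘁ)) ≫ (β_ B (Bᘁ)).hom ≫ ε_ B (Bᘁ) := by
  rw [comp_whiskerRight, comp_whiskerRight]
  slice_lhs 3 4 => rw [BraidedCategory.braiding_naturality_left]
  slice_lhs 4 5 => rw [← rightAdjointMate_comp_evaluation]
  slice_lhs 3 4 => rw [← BraidedCategory.braiding_naturality_right]
  slice_lhs 2 3 => rw [← whisker_exchange]
  slice_lhs 1 2 => rw [coevaluation_comp_rightAdjointMate]
  simp

private def mkPairing {C : Type*} [Category C] [MonoidalCategory C]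
    {A Av : C} (η : 𝟙_ C ⟶ A ⊗ Av) (ε : Av ⊗ A ⟶ 𝟙_ C)
    (zig : (λ_ A).inv ≫ (η ▷ A) ≫ (α_ A Av A).hom ≫ (A ◁ ε) ≫ (ρ_ A).hom = 𝟙 A)
    (zag : (ρ_ Av).inv ≫ (Av ◁ η) ≫ (α_ Av A Av).inv ≫ (ε ▷ Av) ≫ (λ_ Av).hom = 𝟙 Av) :
    ExactPairing A Av where
  coevaluation' := η
  evaluation' := ε
  coevaluation_evaluation' := by
    have := congrArg (fun t => (ρ_ Av).hom ≫ t ≫ (λ_ Av).inv) zag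
    simpa using this
  evaluation_coevaluation' := by
    have := congrArg (fun t => (λ_ A).hom ≫ t ≫ (ρ_ A).inv) zig
    simpa using this

/-- Coherence of the cyclic rotation identifications of traces: for dualizable objects
`A`, `B`, `C` and morphisms `Φ : A ⟶ B`, `Ψ : B ⟶ C`, `Υ : C ⟶ A`, the identifications
`m(Ψ, Φ∘Υ) : Tr(Ψ∘Φ∘Υ) ≅ Tr(Φ∘Υ∘Ψ)`, `m(Φ, Υ∘Ψ) : Tr(Φ∘Υ∘Ψ) ≅ Tr(Υ∘Ψ∘Φ)` and
`m(Ψ∘Φ, Υ) : Tr(Ψ∘Φ∘Υ) ≅ Tr(Υ∘Ψ∘Φ)` form a commuting triangle.  In a 1-category these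
identifications are equalities of endomorphisms of the monoidal unit, so the triangle
amounts to the three equalities of traces below (the composite of the first two being
the third). -/
theorem trace_cyclic_coherence {C : Type*} [Category C] [MonoidalCategory C]
    [SymmetricCategory C] {A Av B Bv X Xv : C}
    (ηA : 𝟙_ C ⟶ A ⊗ Av) (εA : Av ⊗ A ⟶ 𝟙_ C)
    (ηB : 𝟙_ C ⟶ B ⊗ Bv) (εB : Bv ⊗ B ⟶ 𝟙_ C)
    (ηX : 𝟙_ C ⟶ X ⊗ Xv) (εX : Xv ⊗ X ⟶ 𝟙_ C)
    (zigA : (λ_ A).inv ≫ (ηA ▷ A) ≫ (α_ A Av A).hom ≫ (A ◁ εA) ≫ (ρ_ A).hom = 𝟙 A)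
    (zagA : (ρ_ Av).inv ≫ (Av ◁ ηA) ≫ (α_ Av A Av).inv ≫ (εA ▷ Av) ≫ (λ_ Av).hom = 𝟙 Av)
    (zigB : (λ_ B).inv ≫ (ηB ▷ B) ≫ (α_ B Bv B).hom ≫ (B ◁ εB) ≫ (ρ_ B).hom = 𝟙 B)
    (zagB : (ρ_ Bv).inv ≫ (Bv ◁ ηB) ≫ (α_ Bv B Bv).inv ≫ (εB ▷ Bv) ≫ (λ_ Bv).hom = 𝟙 Bv)
    (zigX : (λ_ X).inv ≫ (ηX ▷ X) ≫ (α_ X Xv X).hom ≫ (X ◁ εX) ≫ (ρ_ X).hom = 𝟙 X)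
    (zagX : (ρ_ Xv).inv ≫ (Xv ◁ ηX) ≫ (α_ Xv X Xv).inv ≫ (εX ▷ Xv) ≫ (λ_ Xv).hom = 𝟙 Xv)
    (Φ : A ⟶ B) (Ψ : B ⟶ X) (Υ : X ⟶ A) :
    catTrace ηX εX (Υ ≫ Φ ≫ Ψ) = catTrace ηB εB (Ψ ≫ Υ ≫ Φ) ∧
    catTrace ηB εB (Ψ ≫ Υ ≫ Φ) = catTrace ηA εA (Φ ≫ Ψ ≫ Υ) ∧
    catTrace ηX εX (Υ ≫ Φ ≫ Ψ) = catTrace ηA εA (Φ ≫ Ψ ≫ Υ) := by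
  letI pA := mkPairing ηA εA zigA zagA
  letI pB := mkPairing ηB εB zigB zagB
  letI pX := mkPairing ηX εX zigX zagX
  letI dA : HasRightDual A := ⟨Av⟩
  letI dB : HasRightDual B := ⟨Bv⟩
  letI dX : HasRightDual X := ⟨Xv⟩
  have h1 : catTrace ηX εX (Υ ≫ Φ ≫ Ψ) = catTrace ηB εB (Ψ ≫ Υ ≫ Φ) := by
    rw [← Category.assoc Υ Φ Ψ]
    exact trace_swap (Υ ≫ Φ) Ψ
  have h2 : catTrace ηB εB (Ψ ≫ Υ ≫ Φ) = catTrace ηA εA (Φ ≫ Ψ ≫ Υ) := by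
    rw [← Category.assoc Ψ Υ Φ]
    exact trace_swap (Ψ ≫ Υ) Φ
  exact ⟨h1, h2, h1.trans h2⟩
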